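/- Let A be a unital C*-algebra and let e, e' be projections in A such that e·e' = 0, e ∼ e', and 1 − e − e' ≾ e. Then there exist projections f₀, f₁, f₂, g₁, g₂ in A that are pairwise orthogonal (the product of any two distinct ones is 0), satisfy f₀ + f₁ + f₂ + g₁ + g₂ = 1, f₀ = 1 − e − e', f₀ ∼ f₁, f₁ ∼ f₂, and g₁ ∼ g₂. -/

import Mathlib

/-- A projection in a C*-algebra: a self-adjoint idempotent. -/
def IsProjection {A : Type*} [Ring A] [StarRing A] (p : A) : Prop :=
  IsSelfAdjoint p ∧ p * p = p

/-- Murray–von Neumann equivalence of projections. -/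
def MvNEquiv {A : Type*} [Ring A] [StarRing A] (p q : A) : Prop :=
  ∃ v : A, star v * v = p ∧ v * star v = q

/-- Murray–von Neumann subequivalence: `p` is equivalent to a subprojection of `q`. -/
def MvNSubequiv {A : Type*} [Ring A] [StarRing A] (p q : A) : Prop :=
  ∃ r : A, IsProjection r ∧ r = q * r ∧ r = r * q ∧ MvNEquiv p r

/-!
Let `w` implement `e ∼ e'` and let `r` be the subprojection of `e` equivalent to `1 - e - e'`.
Conjugating by `w` carries `r` to a subprojection `f = w r w*` of `e' = w w*` with `r ∼ f`, and
carries `e - r` onto `e' - f`. The partition is `1 - e - e', r, f, e - r, e' - f`; the only analytic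
input is that `w* w` idempotent forces `w (w* w) = w`, by the C*-identity.
-/

section StarRing

variable {R : Type*} [Ring R] [StarRing R]

theorem isProjection_iff_isStarProjection {p : R} : IsProjection p ↔ IsStarProjection p :=
  ⟨fun h ↦ ⟨h.2, h.1⟩, fun h ↦ ⟨h.2, h.1⟩⟩

namespace IsStarProjection

variable {p q : R}

theorem mul_eq_self_comm (hp : IsStarProjection p) (hq : IsStarProjection q) (h : p * q = p) :
    q * p = p := by
  simpa [hp.isSelfAdjoint.star_eq, hq.isSelfAdjoint.star_eq] using congr(star $h)

theorem mul_eq_zero_comm (hp : IsStarProjection p) (hq : IsStarProjection q) (h : p * q = 0) :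
    q * p = 0 := by
  simpa [hp.isSelfAdjoint.star_eq, hq.isSelfAdjoint.star_eq] using congr(star $h)

theorem pairwise_mul_eq_zero_of_subprojections {e e' r f : R} (he : IsStarProjection e)
    (he' : IsStarProjection e') (hr : IsStarProjection r) (hf : IsStarProjection f)
    (hee' : e * e' = 0) (hre : r * e = r) (hfe' : f * e' = f) :
    Pairwise fun i j ↦
      ![1 - e - e', r, f, e - r, e' - f] i * ![1 - e - e', r, f, e - r, e' - f] j = 0 := by
  have her := hr.mul_eq_self_comm he hre
  have he'f := hf.mul_eq_self_comm he' hfe'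
  have hre' : r * e' = 0 := by rw [← hre, mul_assoc, hee', mul_zero]
  have he'e := he.mul_eq_zero_comm he' hee'
  have hfe : f * e = 0 := by rw [← hfe', mul_assoc, he'e, mul_zero]
  have hrf : r * f = 0 := by rw [← he'f, ← mul_assoc, hre', zero_mul]
  intro i j hij
  fin_cases i <;> fin_cases j <;>
    simp [mul_sub, sub_mul, hee', he'e, hre, her, hfe', he'f, hre', hfe, hrf,
      hr.mul_eq_zero_comm he' hre', hf.mul_eq_zero_comm he hfe, hr.mul_eq_zero_comm hf hrf,
      he.isIdempotentElem.eq, he'.isIdempotentElem.eq, hr.isIdempotentElem.eq,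
      hf.isIdempotentElem.eq] at hij ⊢

end IsStarProjection

variable {w r : R}

theorem IsStarProjection.conjugate (hr : IsStarProjection r) (hrw : r * (star w * w) = r) :
    IsStarProjection (w * r * star w) where
  isSelfAdjoint := hr.isSelfAdjoint.conjugate w
  isIdempotentElem := by
    calc w * r * star w * (w * r * star w) = w * (r * (star w * w)) * r * star w := by
          simp only [mul_assoc]
      _ = w * r * star w := by rw [hrw, mul_assoc w r r, hr.isIdempotentElem.eq]

theorem conjugate_mul_mul_star_self (hrw : r * (star w * w) = r) :
    w * r * star w * (w * star w) = w * r * star w := by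
  calc w * r * star w * (w * star w) = w * (r * (star w * w)) * star w := by simp only [mul_assoc]
    _ = w * r * star w := by rw [hrw]

theorem mvNEquiv_conjugate (hr : IsStarProjection r) (hrw : r * (star w * w) = r) :
    MvNEquiv r (w * r * star w) := by
  refine ⟨w * r, ?_, ?_⟩
  · rw [star_mul, hr.isSelfAdjoint.star_eq, ← mul_assoc, mul_assoc r, hrw,
      hr.isIdempotentElem.eq]
  · rw [star_mul, hr.isSelfAdjoint.star_eq, ← mul_assoc, mul_assoc w r r, hr.isIdempotentElem.eq]

end StarRing

section CStarRing

variable {A : Type*} [NormedRing A] [StarRing A] [CStarRing A] {w r : A}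

theorem mul_star_mul_self_of_isIdempotentElem (hw : IsIdempotentElem (star w * w)) :
    w * (star w * w) = w := by
  rw [← sub_eq_zero, ← CStarRing.star_mul_self_eq_zero_iff]
  calc star (w * (star w * w) - w) * (w * (star w * w) - w)
        = (star w * w) * (star w * w) * (star w * w) - (star w * w) * (star w * w)
          - (star w * w) * (star w * w) + star w * w := by
        simp only [star_sub, star_mul, star_star]
        noncomm_ring
    _ = 0 := by rw [hw.eq, hw.eq, sub_self, zero_sub, neg_add_cancel]

theorem isStarProjection_mul_star_self (hw : IsIdempotentElem (star w * w)) :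
    IsStarProjection (w * star w) := by
  refine ⟨?_, .mul_star_self w⟩
  calc w * star w * (w * star w) = w * (star w * w) * star w := by simp only [mul_assoc]
    _ = w * star w := by rw [mul_star_mul_self_of_isIdempotentElem hw]

theorem mvNEquiv_sub_conjugate (he : IsStarProjection (star w * w)) (hr : IsStarProjection r)
    (hrw : r * (star w * w) = r) :
    MvNEquiv (star w * w - r) (w * star w - w * r * star w) := by
  have h := mvNEquiv_conjugate (w := w) (hr.sub_of_mul_eq_left he hrw)
    (by rw [sub_mul, he.isIdempotentElem.eq, hrw])
  rwa [mul_sub, sub_mul, mul_star_mul_self_of_isIdempotentElem he.isIdempotentElem] at h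

end CStarRing

theorem exists_partition_of_unity_3_2_general
    {A : Type*} [NormedRing A] [StarRing A] [CStarRing A]
    (e e' : A) (he : IsProjection e)
    (horth : e * e' = 0) (hequiv : MvNEquiv e e')
    (hsub : MvNSubequiv (1 - e - e') e) :
    ∃ f : Fin 5 → A,
      (∀ i, IsProjection (f i)) ∧
      (∀ i j, i ≠ j → f i * f j = 0) ∧
      f 0 + f 1 + f 2 + f 3 + f 4 = 1 ∧
      f 0 = 1 - e - e' ∧
      MvNEquiv (f 0) (f 1) ∧ MvNEquiv (f 1) (f 2) ∧ MvNEquiv (f 3) (f 4) := by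
  obtain ⟨r, hr, -, hre, hr₀⟩ := hsub
  obtain ⟨w, rfl, rfl⟩ := hequiv
  rw [isProjection_iff_isStarProjection] at he hr
  have hre : r * (star w * w) = r := hre.symm
  have he' := isStarProjection_mul_star_self he.isIdempotentElem
  have hf := hr.conjugate hre
  have hfe' := conjugate_mul_mul_star_self hre
  refine ⟨![1 - star w * w - w * star w, r, w * r * star w, star w * w - r,
    w * star w - w * r * star w], ?_,
    he.pairwise_mul_eq_zero_of_subprojections he' hr hf horth hre hfe', by dsimp; abel, rfl, hr₀,
    mvNEquiv_conjugate hr hre, mvNEquiv_sub_conjugate he hr hre⟩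
  simp only [Fin.forall_fin_succ, isProjection_iff_isStarProjection]
  exact ⟨sub_sub 1 _ (w * star w) ▸ (he.add he' horth).one_sub, hr, hf,
    hr.sub_of_mul_eq_left he hre, hf.sub_of_mul_eq_left he' hfe', fun i ↦ i.elim0⟩

/-- If `e, e'` are projections in a unital C*-algebra `A` with `e·e' = 0`,
`e ∼ e'`, and `1 - e - e' ≾ e`, then there exist pairwise orthogonal projections
`f₀, f₁, f₂, g₁, g₂` (indexed below by `f 0, f 1, f 2, f 3, f 4`) summing to `1`,
with `f₀ = 1 - e - e'`, `f₀ ∼ f₁ ∼ f₂` and `g₁ ∼ g₂`. -/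
theorem exists_partition_of_unity_3_2
    {A : Type*} [NormedRing A] [StarRing A] [CStarRing A] [CompleteSpace A]
    [NormedAlgebra ℂ A] [StarModule ℂ A]
    (e e' : A) (he : IsProjection e) (he' : IsProjection e')
    (horth : e * e' = 0) (hequiv : MvNEquiv e e')
    (hsub : MvNSubequiv (1 - e - e') e) :
    ∃ f : Fin 5 → A,
      (∀ i, IsProjection (f i)) ∧
      (∀ i j, i ≠ j → f i * f j = 0) ∧
      f 0 + f 1 + f 2 + f 3 + f 4 = 1 ∧
      f 0 = 1 - e - e' ∧
      MvNEquiv (f 0) (f 1) ∧ MvNEquiv (f 1) (f 2) ∧ MvNEquiv (f 3) (f 4) :=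
  exists_partition_of_unity_3_2_general e e' he horth hequiv hsub
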